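/- Let K_∞ = F_q((1/t)) and let L_i(u) = Σ_{j=1}^s γ_{i,j} u_j (i = 1,...,s) be linear forms with symmetric coefficient matrix (γ_{i,j} = γ_{j,i}) over K_∞. For real a and Z, let M(a;Z) be the number of tuples (u_1,...,u_{2s}) ∈ F_q[t]^{2s} with |u_j| < q^{a+Z} for j = 1,...,s and |L_i(u) + u_{s+i}| < q^{Z−a} for i = 1,...,s. Then whenever Z_1 ≤ Z_2 ≤ 0, one has M(a;Z_1)/M(a;Z_2) ≫ q^{s(Z_1−Z_2)}, with an implied constant depending only on s and q. -/

import Mathlib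

noncomputable section

open scoped BigOperators Classical

variable (Fq : Type) [Field Fq] [Fintype Fq]

/-- `t` as an element of `K_∞ = F_q((1/t))`, realized as Laurent series in `X = t⁻¹`. -/
def tvar : LaurentSeries Fq := HahnSeries.single (-1 : ℤ) 1

/-- The embedding of `A = F_q[t]` into `K_∞`. -/
def polyEmb : Polynomial Fq →+* LaurentSeries Fq := (Polynomial.aeval (tvar Fq)).toRingHom

/-- The absolute value `|α| = q^{ord α}` on `K_∞`. -/
def Kabs (α : LaurentSeries Fq) : ℝ :=
  if α = 0 then 0 else (Fintype.card Fq : ℝ) ^ (-(HahnSeries.order α))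

/-- The fractional part `{α}₀`: keep only the strictly negative powers of `t`. -/
def fracPart (α : LaurentSeries Fq) : LaurentSeries Fq :=
  ⟨fun n => if 0 < n then α.coeff n else 0, α.isPWO_support'.mono (by
    intro n hn
    by_cases h : 0 < n
    · simpa [Function.mem_support, h] using hn
    · simp [Function.mem_support, h] at hn)⟩

/-- `⟨α⟩ = |{α}₀|`. -/
def frabs (α : LaurentSeries Fq) : ℝ := Kabs Fq (fracPart Fq α)

/-- The standard additive character `E` on `K_∞`. -/
def Echar (α : LaurentSeries Fq) : ℂ :=
  letI : Algebra (ZMod (ringChar Fq)) Fq := ZMod.algebra _ _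
  Complex.exp (2 * Real.pi * Complex.I *
    (((Algebra.trace (ZMod (ringChar Fq)) Fq (α.coeff 1)).val : ℂ) / (ringChar Fq : ℂ)))

/-- The polynomial with coefficient tuple `v` (degree `< c`). -/
def polyOfTuple {c : ℕ} (v : Fin c → Fq) : Polynomial Fq :=
  ∑ j : Fin c, Polynomial.C (v j) * Polynomial.X ^ (j : ℕ)

/-- Max-norm of a tuple in `K_∞^D`. -/
def Knorm {D : ℕ} (x : Fin D → LaurentSeries Fq) : ℝ := ⨆ i, Kabs Fq (x i)


/-- `M(a;Z)`: the number of `(u₁,...,u_{2s}) ∈ F_q[t]^{2s}` with `|u_j| < q^{a+Z}`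
for `j ≤ s` and `|L_i(u) + u_{s+i}| < q^{Z-a}` for `i ≤ s`. -/
def Mcount {s : ℕ} (γ : Matrix (Fin s) (Fin s) (LaurentSeries Fq)) (a Z : ℝ) : ℕ :=
  Set.ncard {uv : (Fin s → Polynomial Fq) × (Fin s → Polynomial Fq) |
    (∀ j, Kabs Fq (polyEmb Fq (uv.1 j)) < (Fintype.card Fq : ℝ) ^ (a + Z)) ∧
    ∀ i, Kabs Fq ((∑ j, γ i j * polyEmb Fq (uv.1 j)) + polyEmb Fq (uv.2 i))
      < (Fintype.card Fq : ℝ) ^ (Z - a)}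

/-!
Let `ν(x)` be the order of `x` as a series in `1/t` (`orderTop`), so `|x| = q^{-ν(x)}`.
For integers `b, c` the tuples `(u, u')` with `ν(uⱼ) ≥ b` and `ν((γu + u')ᵢ) ≥ c` form a finite
`F_q`-space `S(b, c)`, and `M(a; Z)` is the size of such a space. Recording the coefficients of
`t^{-b}` in `u` and of `t^{-c}` in `γu + u'` is a linear map `S(b, c) → F_q^{2s}` with kernel
`S(b + 1, c + 1)`. When `b + c ≥ 1` its image is isotropic for the standard symplectic form:
for `(u, u'), (v, v') ∈ S(b, c)`, the symmetry of `γ` makes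
`(γu + u')·v - (γv + v')·u = u'·v - v'·u` a polynomial, whose coefficient of `t^{-(b+c)}`
vanishes, and that coefficient is the symplectic pairing of the two images. So the image has at
most `q^s` elements, each step `(b, c) ↦ (b + 1, c + 1)` loses at most a factor `q^s`, and
shrinking `Z` by `Z₂ - Z₁` takes `⌈Z₂ - Z₁⌉` steps, all with `b + c ≥ 1` because `Z₂ ≤ 0`.
-/

open Matrix Module Polynomial

namespace HahnSeries

section Coefficients

variable {Γ R : Type*} [AddCommMonoid Γ] [LinearOrder Γ] [IsOrderedCancelAddMonoid Γ]
  [NonUnitalNonAssocSemiring R]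

theorem coeff_mul_of_le_orderTop {x y : HahnSeries Γ R} {a b : Γ} (ha : ↑a ≤ x.orderTop)
    (hb : ↑b ≤ y.orderTop) : (x * y).coeff (a + b) = x.coeff a * y.coeff b := by
  have hx : ∀ i < a, x.coeff i = 0 := fun i hi => le_orderTop_iff_forall.mp ha i (by simpa)
  have hy : ∀ j < b, y.coeff j = 0 := fun j hj => le_orderTop_iff_forall.mp hb j (by simpa)
  rw [coeff_mul, Finset.sum_eq_single (a, b)]
  · rintro ⟨i, j⟩ hij hne
    have hij : i + j = a + b := (Finset.mem_antidiagonal.mp hij).2.2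
    rcases lt_or_ge i a with hi | hi
    · rw [hx i hi, zero_mul]
    rcases lt_or_ge j b with hj | hj
    · rw [hy j hj, mul_zero]
    obtain rfl : i = a := by
      refine le_antisymm ?_ hi
      by_contra! hai
      exact (add_lt_add_of_lt_of_le hai hj).ne' hij
    exact absurd (congrArg _ (add_left_cancel hij)) hne
  · intro h
    simp only [Finset.mem_antidiagonal, mem_support, and_true, not_and_or, not_not] at h
    rcases h with h | h <;> simp [h]

theorem coeff_dotProduct_of_le_orderTop {ι : Type*} [Fintype ι] {v w : ι → HahnSeries Γ R}
    {a b : Γ} (hv : ∀ i, ↑a ≤ (v i).orderTop) (hw : ∀ i, ↑b ≤ (w i).orderTop) :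
    (v ⬝ᵥ w).coeff (a + b) = (fun i => (v i).coeff a) ⬝ᵥ fun i => (w i).coeff b := by
  simp only [dotProduct, coeff_sum, coeff_mul_of_le_orderTop (hv _) (hw _)]

end Coefficients

theorem coe_add_one_le_orderTop_iff {R : Type*} [Zero R] {x : HahnSeries ℤ R} {b : ℤ}
    (hb : ↑b ≤ x.orderTop) : ↑(b + 1) ≤ x.orderTop ↔ x.coeff b = 0 := by
  refine ⟨fun h => coeff_eq_zero_of_lt_orderTop
    ((WithTop.coe_lt_coe.mpr (lt_add_one b)).trans_le h),
    fun h => le_orderTop_iff_forall.mpr fun j hj => ?_⟩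
  rcases (Int.lt_add_one_iff.mp (WithTop.coe_lt_coe.mp hj)).lt_or_eq with hj | rfl
  · exact le_orderTop_iff_forall.mp hb j (WithTop.coe_lt_coe.mpr hj)
  · exact h

end HahnSeries

theorem LinearMap.BilinForm.two_mul_finrank_le_of_le_orthogonal {K V : Type*} [Field K]
    [AddCommGroup V] [Module K V] [FiniteDimensional K V] {B : LinearMap.BilinForm K V}
    (hB : B.Nondegenerate) {W : Submodule K V} (hW : W ≤ B.orthogonal W) :
    2 * finrank K W ≤ finrank K V := by
  have := Submodule.finrank_mono hW
  rw [finrank_orthogonal hB] at this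
  have := Submodule.finrank_le W
  omega

namespace Matrix

theorem IsSymm.mulVec_dotProduct_comm {n R : Type*} [Fintype n] [CommSemiring R]
    {A : Matrix n n R} (hA : A.IsSymm) (v w : n → R) : A *ᵥ v ⬝ᵥ w = A *ᵥ w ⬝ᵥ v := by
  rw [dotProduct_comm, dotProduct_mulVec, ← mulVec_transpose, hA.eq]

variable {l K : Type*} [Fintype l] [DecidableEq l]

theorem toBilin'_J_sumElim [CommRing K] (p q p' q' : l → K) :
    toBilin' (J l K) (Sum.elim p q) (Sum.elim p' q') = q ⬝ᵥ p' - q' ⬝ᵥ p := by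
  simp [toBilin'_apply', J, fromBlocks_mulVec, neg_mulVec, dotProduct_comm p q', sub_eq_neg_add]

theorem card_le_of_isotropic_J [Field K] [Fintype K] {W : Submodule K (l ⊕ l → K)}
    (hW : ∀ v ∈ W, ∀ w ∈ W, toBilin' (J l K) v w = 0) :
    Nat.card W ≤ Fintype.card K ^ Fintype.card l := by
  have hB : (toBilin' (J l K)).Nondegenerate :=
    LinearMap.BilinForm.nondegenerate_toBilin'_of_det_ne_zero' _ (isUnit_det_J l K).ne_zero
  have := LinearMap.BilinForm.two_mul_finrank_le_of_le_orthogonal hB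
    fun w hw => LinearMap.BilinForm.mem_orthogonal_iff.mpr fun v hv => hW v hv w hw
  rw [finrank_fintype_fun_eq_card, Fintype.card_sum] at this
  rw [natCard_eq_pow_finrank (K := K), Nat.card_eq_fintype_card]
  exact Nat.pow_le_pow_right Fintype.card_pos (by omega)

end Matrix

section PolyEmb

variable {F : Type} [Field F]

theorem polyEmb_C (κ : F) : polyEmb F (C κ) = HahnSeries.C κ := by
  simp [polyEmb, HahnSeries.algebraMap_apply']

theorem polyEmb_monomial (k : ℕ) (a : F) :
    polyEmb F (monomial k a) = HahnSeries.single (-(k : ℤ)) a := by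
  rw [← C_mul_X_pow_eq_monomial, map_mul, polyEmb_C, map_pow]
  simp [polyEmb, tvar, HahnSeries.single_pow]

theorem coeff_polyEmb (p : F[X]) (n : ℤ) :
    (polyEmb F p).coeff n = if n ≤ 0 then p.coeff (-n).toNat else 0 := by
  induction p using Polynomial.induction_on' with
  | add p q hp hq =>
    simp only [map_add, HahnSeries.coeff_add, hp, hq, coeff_add]
    split_ifs <;> simp
  | monomial k a =>
    rw [polyEmb_monomial, HahnSeries.coeff_single, coeff_monomial]
    split_ifs <;> first | rfl | omega

theorem coeff_polyEmb_of_pos (p : F[X]) {n : ℤ} (hn : 0 < n) : (polyEmb F p).coeff n = 0 := by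
  rw [coeff_polyEmb, if_neg hn.not_ge]

theorem eq_zero_of_one_le_orderTop_polyEmb {p : F[X]} (hp : 1 ≤ (polyEmb F p).orderTop) :
    p = 0 := by
  ext k
  have hk : ((-k : ℤ) : WithTop ℤ) < 1 := WithTop.coe_lt_coe.mpr (by omega)
  simpa [coeff_polyEmb] using HahnSeries.coeff_eq_zero_of_lt_orderTop (hk.trans_le hp)

end PolyEmb

variable {Fq} in
theorem Kabs_lt_rpow_iff (x : LaurentSeries Fq) (c : ℝ) :
    Kabs Fq x < (Fintype.card Fq : ℝ) ^ c ↔ ↑(⌊-c⌋ + 1) ≤ x.orderTop := by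
  have hq : (1 : ℝ) < Fintype.card Fq := by exact_mod_cast Fintype.one_lt_card
  rcases eq_or_ne x 0 with rfl | hx
  · simp [Kabs, Real.rpow_pos_of_pos (zero_lt_one.trans hq)]
  rw [Kabs, if_neg hx, ← Real.rpow_intCast, Real.rpow_lt_rpow_left_iff hq,
    ← HahnSeries.order_eq_orderTop_of_ne_zero hx, WithTop.coe_le_coe, Int.add_one_le_iff,
    Int.floor_lt]
  push_cast
  constructor <;> intro h <;> linarith

section Lattice

variable {F : Type} [Field F] {s : ℕ}

variable (F s) in
abbrev PolyPair : Type := (Fin s → F[X]) × (Fin s → F[X])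

variable (F) in
def orderTopGe (b : ℤ) : Submodule F (LaurentSeries F) where
  carrier := {x | ↑b ≤ x.orderTop}
  zero_mem' := by simp
  add_mem' {x y} hx hy := show ↑b ≤ (x + y).orderTop from
    (le_min hx hy).trans HahnSeries.min_orderTop_le_orderTop_add
  smul_mem' κ _ hx := hx.trans (HahnSeries.orderTop_le_orderTop_smul κ _)

/-- The lattice `Λ` of the paper, before its two blocks are rescaled by `t^{∓b}`. -/
def latticeMap (γ : Matrix (Fin s) (Fin s) (LaurentSeries F)) :
    PolyPair F s →ₗ[F] (Fin s → LaurentSeries F) × (Fin s → LaurentSeries F) where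
  toFun x := (polyEmb F ∘ x.1, γ *ᵥ (polyEmb F ∘ x.1) + polyEmb F ∘ x.2)
  map_add' x y := by
    refine Prod.ext (funext fun j => ?_) (funext fun i => ?_) <;> simp [mulVec_add]
    abel
  map_smul' κ x := by
    refine Prod.ext (funext fun j => ?_) (funext fun i => ?_) <;>
      simp only [Prod.smul_fst, Prod.smul_snd, Pi.smul_apply, Function.comp_apply, smul_eq_C_mul,
        map_mul, polyEmb_C, RingHom.id_apply, ← HahnSeries.C_mul_eq_smul, Pi.add_apply, mulVec,
        dotProduct, Finset.mul_sum, mul_add, mul_left_comm]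

theorem latticeMap_apply (γ : Matrix (Fin s) (Fin s) (LaurentSeries F)) (x : PolyPair F s) :
    latticeMap γ x = (polyEmb F ∘ x.1, γ *ᵥ (polyEmb F ∘ x.1) + polyEmb F ∘ x.2) := rfl

def solSpace (γ : Matrix (Fin s) (Fin s) (LaurentSeries F)) (b c : ℤ) :
    Submodule F (PolyPair F s) :=
  ((Submodule.pi Set.univ fun _ => orderTopGe F b).prod
    (Submodule.pi Set.univ fun _ => orderTopGe F c)).comap (latticeMap γ)

def leadingCoeffMap (γ : Matrix (Fin s) (Fin s) (LaurentSeries F)) (b c : ℤ) :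
    PolyPair F s →ₗ[F] (Fin s ⊕ Fin s → F) :=
  (LinearEquiv.sumArrowLequivProdArrow _ _ F F).symm.toLinearMap ∘ₗ
    (((HahnSeries.coeff.linearMap b).compLeft _).prodMap
      ((HahnSeries.coeff.linearMap c).compLeft _)) ∘ₗ latticeMap γ

theorem leadingCoeffMap_apply (γ : Matrix (Fin s) (Fin s) (LaurentSeries F)) (b c : ℤ)
    (x : PolyPair F s) :
    leadingCoeffMap γ b c x =
      Sum.elim (fun j => ((latticeMap γ x).1 j).coeff b) fun i => ((latticeMap γ x).2 i).coeff c :=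
  rfl

variable {γ : Matrix (Fin s) (Fin s) (LaurentSeries F)} {b c : ℤ}

theorem mem_solSpace {x : PolyPair F s} :
    x ∈ solSpace γ b c ↔
      (∀ j, ↑b ≤ ((latticeMap γ x).1 j).orderTop) ∧ ∀ i, ↑c ≤ ((latticeMap γ x).2 i).orderTop := by
  simp [solSpace, Submodule.mem_pi, orderTopGe]

theorem solSpace_le_solSpace {b' c' : ℤ} (hb : b' ≤ b) (hc : c' ≤ c) :
    solSpace γ b c ≤ solSpace γ b' c' := fun _ hx =>
  have hx := mem_solSpace.mp hx
  mem_solSpace.mpr ⟨fun j => (WithTop.coe_le_coe.mpr hb).trans (hx.1 j),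
    fun i => (WithTop.coe_le_coe.mpr hc).trans (hx.2 i)⟩

theorem solSpace_eq_bot (hb : 1 ≤ b) (hc : 1 ≤ c) : solSpace γ b c = ⊥ := by
  refine eq_bot_iff.mpr fun x hx => ?_
  obtain ⟨hx₁, hx₂⟩ := mem_solSpace.mp hx
  have h₁ : x.1 = 0 := funext fun j =>
    eq_zero_of_one_le_orderTop_polyEmb ((WithTop.coe_le_coe.mpr hb).trans (hx₁ j))
  have h₂ : x.2 = 0 := funext fun i => by
    refine eq_zero_of_one_le_orderTop_polyEmb ((WithTop.coe_le_coe.mpr hc).trans ?_)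
    simpa [latticeMap_apply, h₁] using hx₂ i
  exact (Submodule.mem_bot F).mpr (Prod.ext h₁ h₂)

theorem mem_solSpace_add_one_iff {x : PolyPair F s} (hx : x ∈ solSpace γ b c) :
    x ∈ solSpace γ (b + 1) (c + 1) ↔ leadingCoeffMap γ b c x = 0 := by
  obtain ⟨hx₁, hx₂⟩ := mem_solSpace.mp hx
  simp only [mem_solSpace, HahnSeries.coe_add_one_le_orderTop_iff (hx₁ _),
    HahnSeries.coe_add_one_le_orderTop_iff (hx₂ _), leadingCoeffMap_apply, funext_iff, Sum.forall,
    Sum.elim_inl, Sum.elim_inr, Pi.zero_apply]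

theorem card_solSpace_eq (γ : Matrix (Fin s) (Fin s) (LaurentSeries F)) (b c : ℤ) :
    Nat.card (solSpace γ b c) = Nat.card (solSpace γ (b + 1) (c + 1)) *
      Nat.card ((solSpace γ b c).map (leadingCoeffMap γ b c)) := by
  set f := (leadingCoeffMap γ b c).domRestrict (solSpace γ b c)
  have hker : LinearMap.ker f = (solSpace γ (b + 1) (c + 1)).comap (solSpace γ b c).subtype := by
    ext x
    simp [f, mem_solSpace_add_one_iff x.2]
  have hle : solSpace γ (b + 1) (c + 1) ≤ solSpace γ b c :=
    solSpace_le_solSpace (by omega) (by omega)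
  rw [(LinearMap.ker f).card_eq_card_quotient_mul_card, Nat.card_congr f.quotKerEquivRange.toEquiv,
    hker, Nat.card_congr (Submodule.comapSubtypeEquivOfLe hle).toEquiv,
    LinearMap.range_domRestrict]

theorem toBilin'_J_leadingCoeffMap (hγ : γ.IsSymm) (hbc : 1 ≤ b + c) {x y : PolyPair F s}
    (hx : x ∈ solSpace γ b c) (hy : y ∈ solSpace γ b c) :
    toBilin' (J (Fin s) F) (leadingCoeffMap γ b c x) (leadingCoeffMap γ b c y) = 0 := by
  rw [mem_solSpace] at hx hy
  have hpoly : (latticeMap γ x).2 ⬝ᵥ (latticeMap γ y).1 - (latticeMap γ y).2 ⬝ᵥ (latticeMap γ x).1 =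
      polyEmb F (x.2 ⬝ᵥ y.1 - y.2 ⬝ᵥ x.1) := by
    simp only [latticeMap_apply, add_dotProduct, map_sub, RingHom.map_dotProduct,
      hγ.mulVec_dotProduct_comm (polyEmb F ∘ x.1)]
    abel
  rw [leadingCoeffMap_apply, leadingCoeffMap_apply, toBilin'_J_sumElim,
    ← HahnSeries.coeff_dotProduct_of_le_orderTop hx.2 hy.1,
    ← HahnSeries.coeff_dotProduct_of_le_orderTop hy.2 hx.1, ← HahnSeries.coeff_sub, hpoly,
    coeff_polyEmb_of_pos _ (by omega)]

variable [Fintype F]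

theorem card_solSpace_le_card_add_one_mul (hγ : γ.IsSymm) (hbc : 1 ≤ b + c) :
    Nat.card (solSpace γ b c) ≤ Nat.card (solSpace γ (b + 1) (c + 1)) * Fintype.card F ^ s := by
  rw [card_solSpace_eq]
  refine Nat.mul_le_mul_left _ ?_
  simpa using card_le_of_isotropic_J (K := F) (W := (solSpace γ b c).map (leadingCoeffMap γ b c))
    (by rintro _ ⟨x, hx, rfl⟩ _ ⟨y, hy, rfl⟩; exact toBilin'_J_leadingCoeffMap hγ hbc hx hy)

theorem card_solSpace_le_card_add_mul_pow (hγ : γ.IsSymm) (hbc : 1 ≤ b + c) (k : ℕ) :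
    Nat.card (solSpace γ b c) ≤
      Nat.card (solSpace γ (b + k) (c + k)) * (Fintype.card F ^ s) ^ k := by
  induction k with
  | zero => simp
  | succ k ih =>
    calc Nat.card (solSpace γ b c)
        ≤ Nat.card (solSpace γ (b + k) (c + k)) * (Fintype.card F ^ s) ^ k := ih
      _ ≤ Nat.card (solSpace γ (b + k + 1) (c + k + 1)) * Fintype.card F ^ s *
            (Fintype.card F ^ s) ^ k :=
        Nat.mul_le_mul_right _ (card_solSpace_le_card_add_one_mul hγ (by omega))
      _ = _ := by rw [pow_succ, Nat.cast_succ, ← add_assoc, ← add_assoc]; ring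

theorem finite_solSpace (γ : Matrix (Fin s) (Fin s) (LaurentSeries F)) (b c : ℤ) :
    Finite (solSpace γ b c) := by
  -- `Nat.card` vanishes on infinite types, so `card_solSpace_eq` propagates finiteness downwards.
  have hdiag (n : ℕ) : Nat.card (solSpace γ (1 - n) (1 - n)) ≠ 0 := by
    induction n with
    | zero => simp [solSpace_eq_bot (γ := γ) le_rfl le_rfl]
    | succ n ih =>
      have h : (1 : ℤ) - ↑(n + 1) + 1 = 1 - n := by push_cast; ring
      rw [card_solSpace_eq, h]
      exact mul_ne_zero ih Nat.card_pos.ne'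
  set n := (1 - min b c).toNat
  have := Nat.finite_of_card_ne_zero (hdiag n)
  exact Finite.of_injective _ (Submodule.inclusion_injective
    (solSpace_le_solSpace (γ := γ) (b' := 1 - n) (c' := 1 - n) (by omega) (by omega)))

end Lattice

section Count

variable {Fq} {s : ℕ}

theorem Mcount_eq_card_solSpace (γ : Matrix (Fin s) (Fin s) (LaurentSeries Fq)) (a Z : ℝ) :
    Mcount Fq γ a Z = Nat.card (solSpace γ (⌊-(a + Z)⌋ + 1) (⌊-(Z - a)⌋ + 1)) := by
  rw [Mcount, ← Nat.card_coe_set_eq, ← SetLike.coe_sort_coe]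
  congr 2
  ext x
  simp [mem_solSpace, latticeMap_apply, Kabs_lt_rpow_iff, mulVec, dotProduct]

theorem Mcount_le_Mcount_mul_pow {γ : Matrix (Fin s) (Fin s) (LaurentSeries Fq)} (hγ : γ.IsSymm)
    (a : ℝ) {Z₁ Z₂ : ℝ} (h₂ : Z₂ ≤ 0) :
    Mcount Fq γ a Z₂ ≤ Mcount Fq γ a Z₁ * (Fintype.card Fq ^ s) ^ ⌈Z₂ - Z₁⌉₊ := by
  set k := ⌈Z₂ - Z₁⌉₊
  have hk : Z₂ - Z₁ ≤ k := Nat.le_ceil _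
  have floor_le {x y : ℝ} (h : y ≤ x + (Z₂ - Z₁)) : ⌊y⌋ ≤ ⌊x⌋ + k := by
    rw [← Int.floor_add_natCast]
    exact Int.floor_mono (by linarith)
  have hb : ⌊-(a + Z₁)⌋ ≤ ⌊-(a + Z₂)⌋ + k := floor_le (by linarith)
  have hc : ⌊-(Z₁ - a)⌋ ≤ ⌊-(Z₂ - a)⌋ + k := floor_le (by linarith)
  have hsum : (-2 : ℝ) < ⌊-(a + Z₂)⌋ + ⌊-(Z₂ - a)⌋ := by
    linarith [Int.sub_one_lt_floor (-(a + Z₂)), Int.sub_one_lt_floor (-(Z₂ - a))]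
  have hbc : (-2 : ℤ) < ⌊-(a + Z₂)⌋ + ⌊-(Z₂ - a)⌋ := by exact_mod_cast hsum
  rw [Mcount_eq_card_solSpace, Mcount_eq_card_solSpace]
  have := finite_solSpace γ (⌊-(a + Z₁)⌋ + 1) (⌊-(Z₁ - a)⌋ + 1)
  refine (card_solSpace_le_card_add_mul_pow hγ (by omega) k).trans (Nat.mul_le_mul_right _ ?_)
  exact Nat.card_le_card_of_injective _
    (Submodule.inclusion_injective (solSpace_le_solSpace (by omega) (by omega)))

end Count

theorem shrinking_lemma (s : ℕ) :
    ∃ C : ℝ, 0 < C ∧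
      ∀ (γ : Matrix (Fin s) (Fin s) (LaurentSeries Fq)), (∀ i j, γ i j = γ j i) →
        ∀ a Z₁ Z₂ : ℝ, Z₁ ≤ Z₂ → Z₂ ≤ 0 →
          C * (Fintype.card Fq : ℝ) ^ ((s : ℝ) * (Z₁ - Z₂)) * (Mcount Fq γ a Z₂ : ℝ)
            ≤ (Mcount Fq γ a Z₁ : ℝ) := by
  have hq : (1 : ℝ) < Fintype.card Fq := by exact_mod_cast Fintype.one_lt_card
  set q : ℝ := (Fintype.card Fq : ℝ) with hq_def
  refine ⟨q ^ (-(s : ℝ)), by positivity, fun γ hγ a Z₁ Z₂ h₁₂ h₂ => ?_⟩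
  set k := ⌈Z₂ - Z₁⌉₊
  have hM : (Mcount Fq γ a Z₂ : ℝ) ≤ Mcount Fq γ a Z₁ * q ^ ((s : ℝ) * k) := by
    rw [Real.rpow_mul (by positivity), Real.rpow_natCast, Real.rpow_natCast, hq_def]
    exact_mod_cast Mcount_le_Mcount_mul_pow (Z₁ := Z₁) (IsSymm.ext fun i j => hγ j i) a h₂
  have hk : (k : ℝ) < Z₂ - Z₁ + 1 := Nat.ceil_lt_add_one (by linarith)
  have hexp : q ^ (-(s : ℝ)) * q ^ ((s : ℝ) * (Z₁ - Z₂)) * q ^ ((s : ℝ) * k) ≤ 1 := by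
    rw [← Real.rpow_add (by positivity), ← Real.rpow_add (by positivity)]
    refine Real.rpow_le_one_of_one_le_of_nonpos hq.le ?_
    nlinarith [(Nat.cast_nonneg s : (0 : ℝ) ≤ s)]
  calc _ ≤ q ^ (-(s : ℝ)) * q ^ ((s : ℝ) * (Z₁ - Z₂)) * (Mcount Fq γ a Z₁ * q ^ ((s : ℝ) * k)) :=
        by gcongr
    _ ≤ Mcount Fq γ a Z₁ := by nlinarith [(Nat.cast_nonneg _ : (0 : ℝ) ≤ Mcount Fq γ a Z₁)]

end
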